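/- arXiv:1012.1887 — 5 statements merged into one kernel-verified Lean document; each statement's English description precedes it below -/
import Mathlib

section
/- For a ring R, the map θ ↦ M_n(θ,R) preserves binary suprema: for preorders θ₁, θ₂ on Fin n, the subring of Matrix (Fin n) (Fin n) R generated by M_n(θ₁,R) ∪ M_n(θ₂,R) equals M_n(θ₁ ⊔ θ₂, R), where θ₁ ⊔ θ₂ is the transitive closure of the union of θ₁ and θ₂. -/
/-!
Every generator is supported on `θ₁ ⊔ θ₂`, and matrices supported on a preorder form a subring,
which gives `⊆`. Conversely, a matrix is the sum of its entries placed in matrix units, and the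
identity `E i k c = E i j c * E j k 1` lets a matrix unit along a chain `i θ j θ k ⋯` be built as a
product of matrix units along single `θ₁`- or `θ₂`-steps, each of which is a generator.
-/

open Relation

namespace Matrix

variable {ι R : Type*} [Ring R]

def structuralMatrices (θ : ι → ι → Prop) : Set (Matrix ι ι R) :=
  {A | ∀ i j, A i j ≠ 0 → θ i j}

theorem single_mem_structuralMatrices {θ : ι → ι → Prop} [DecidableEq ι] {i j : ι}
    (h : θ i j) (c : R) : single i j c ∈ structuralMatrices θ := by
  intro a b hab
  by_cases hij : i = a ∧ j = b
  · obtain ⟨rfl, rfl⟩ := hij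
    exact h
  · exact absurd (single_apply_of_ne i j c a b hij) hab

variable [Fintype ι] [DecidableEq ι]

def structuralSubring (θ : ι → ι → Prop) (hr : ∀ i, θ i i)
    (ht : ∀ {i j k}, θ i j → θ j k → θ i k) :
    Subring (Matrix ι ι R) where
  carrier := structuralMatrices θ
  zero_mem' := fun _ _ h => absurd rfl h
  one_mem' := by
    intro i j h
    by_cases hij : i = j
    · exact hij ▸ hr i
    · exact absurd (one_apply_ne hij) h
  add_mem' := by
    intro A B hA hB i j h
    by_cases hAij : A i j = 0
    · exact hB i j (by simpa [hAij] using h)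
    · exact hA i j hAij
  neg_mem' := fun hA i j h => hA i j (neg_ne_zero.mp h)
  mul_mem' := by
    intro A B hA hB i j h
    obtain ⟨k, -, hk⟩ := Finset.exists_ne_zero_of_sum_ne_zero h
    exact ht (hA i k (left_ne_zero_of_mul hk)) (hB k j (right_ne_zero_of_mul hk))

theorem single_mem_of_transGen {θ : ι → ι → Prop} {T : Subring (Matrix ι ι R)}
    (hT : ∀ i j c, θ i j → single i j c ∈ T) {i j : ι} (h : TransGen θ i j) (c : R) :
    single i j c ∈ T := by
  induction h with
  | single hij => exact hT _ _ c hij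
  | @tail k l _ hkl ih =>
    simpa using T.mul_mem ih (hT k l 1 hkl)

theorem structuralMatrices_subset_of_single_mem {θ : ι → ι → Prop} {T : Subring (Matrix ι ι R)}
    (hT : ∀ i j c, θ i j → single i j c ∈ T) :
    structuralMatrices θ ⊆ (T : Set (Matrix ι ι R)) := by
  intro A hA
  rw [matrix_eq_sum_single A]
  refine T.sum_mem fun i _ => T.sum_mem fun j _ => ?_
  by_cases hAij : A i j = 0
  · simp [hAij]
  · exact hT i j _ (hA i j hAij)

theorem closure_eq_structuralMatrices_transGen {θ : ι → ι → Prop} (hθ : ∀ i, θ i i)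
    {S : Set (Matrix ι ι R)} (hS : S ⊆ structuralMatrices θ)
    (hsingle : ∀ i j c, θ i j → single i j c ∈ S) :
    (Subring.closure S : Set (Matrix ι ι R)) = structuralMatrices (TransGen θ) := by
  apply le_antisymm
  · have hle : Subring.closure S ≤
        structuralSubring (TransGen θ) (fun i => .single (hθ i)) .trans :=
      Subring.closure_le.mpr fun A hA i j h => .single (hS hA i j h)
    exact hle
  · exact structuralMatrices_subset_of_single_mem fun i j c h =>
      single_mem_of_transGen (fun i j c h => Subring.subset_closure (hsingle i j c h)) h c

end Matrix

open Matrix in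
theorem structural_matrix_ring_sup_general
    (R : Type*) [Ring R] (n : ℕ)
    (θ₁ θ₂ : Fin n → Fin n → Prop)
    (h₁r : Reflexive θ₁) :
    (Subring.closure
        ({A : Matrix (Fin n) (Fin n) R | ∀ i j, A i j ≠ 0 → θ₁ i j} ∪
          {A : Matrix (Fin n) (Fin n) R | ∀ i j, A i j ≠ 0 → θ₂ i j}) :
        Set (Matrix (Fin n) (Fin n) R)) =
      {A : Matrix (Fin n) (Fin n) R |
        ∀ i j, A i j ≠ 0 → Relation.TransGen (fun a b => θ₁ a b ∨ θ₂ a b) i j} := by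
  refine closure_eq_structuralMatrices_transGen ?_ ?_ ?_
  · exact fun i => Or.inl (h₁r i)
  · rintro A (hA | hA) i j h
    exacts [Or.inl (hA i j h), Or.inr (hA i j h)]
  · rintro i j c (h | h)
    exacts [Or.inl (single_mem_structuralMatrices h c),
      Or.inr (single_mem_structuralMatrices h c)]

theorem structural_matrix_ring_sup
    (R : Type*) [Ring R] (n : ℕ) (hn : 1 ≤ n)
    (θ₁ θ₂ : Fin n → Fin n → Prop)
    (h₁r : Reflexive θ₁) (h₁t : Transitive θ₁)
    (h₂r : Reflexive θ₂) (h₂t : Transitive θ₂) :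
    (Subring.closure
        ({A : Matrix (Fin n) (Fin n) R | ∀ i j, A i j ≠ 0 → θ₁ i j} ∪
          {A : Matrix (Fin n) (Fin n) R | ∀ i j, A i j ≠ 0 → θ₂ i j}) :
        Set (Matrix (Fin n) (Fin n) R)) =
      {A : Matrix (Fin n) (Fin n) R |
        ∀ i j, A i j ≠ 0 → Relation.TransGen (fun a b => θ₁ a b ∨ θ₂ a b) i j} :=
  structural_matrix_ring_sup_general R n θ₁ θ₂ h₁r
end

section
/- For a nontrivial ring R and a preorder θ on Fin n, θ is a partial order if and only if M_n(θ,R) is an intersection of a (nonempty) family of permutation conjugates of the ring of upper triangular matrices. -/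
/-!
Conjugating by the permutation matrix of `σ` turns the support pattern `i ≤ j` of upper triangular
matrices into `σ i ≤ σ j`, an intersection of such sets is cut out by the intersection of the
patterns, and, as `1 ≠ 0`, the matrix units show that a support pattern is determined by its set of
matrices. The theorem thus becomes order theory: a preorder on a finite set is an intersection of
linear orders iff it is antisymmetric. If `a ≰ b` in a partial order, then `b ≤ a` can be adjoined
and Szpilrajn's theorem extends the result to a linear order separating `a` from `b`.
-/

open Equiv

universe u

def structuralMatrices {m : Type*} (R : Type*) [Zero R] (r : m → m → Prop) : Set (Matrix m m R) :=
  {A | ∀ i j, A i j ≠ 0 → r i j}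

section StructuralMatrices

variable {m R : Type*}

theorem iInter_structuralMatrices [Zero R] {ι : Sort*} (r : ι → m → m → Prop) :
    ⋂ s, structuralMatrices R (r s) = structuralMatrices R (fun i j => ∀ s, r s i j) := by
  ext A
  simp only [Set.mem_iInter]
  exact ⟨fun h i j hA s => h s i j hA, fun h s i j hA => h i j hA s⟩

theorem single_one_mem_structuralMatrices_iff [DecidableEq m] [Zero R] [One R] [NeZero (1 : R)]
    {r : m → m → Prop} {i j : m} : Matrix.single i j (1 : R) ∈ structuralMatrices R r ↔ r i j := by
  refine ⟨fun h => h i j (by simp), fun hij a b hab => ?_⟩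
  obtain ⟨rfl, rfl⟩ : i = a ∧ j = b := by
    by_contra hne
    exact hab (Matrix.single_apply_of_ne _ _ _ _ _ hne)
  exact hij

theorem structuralMatrices_inj [DecidableEq m] [Zero R] [One R] [NeZero (1 : R)]
    {r s : m → m → Prop} : structuralMatrices R r = structuralMatrices R s ↔ r = s := by
  refine ⟨fun h => ?_, fun h => h ▸ rfl⟩
  ext i j
  rw [← single_one_mem_structuralMatrices_iff (R := R) (r := r), h,
    single_one_mem_structuralMatrices_iff]

theorem permMatrix_mul_mul_permMatrix_inv [DecidableEq m] [Fintype m] [NonAssocSemiring R]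
    (σ : Perm m) (A : Matrix m m R) : σ.permMatrix R * A * σ⁻¹.permMatrix R = A.submatrix σ σ := by
  rw [Perm.permMatrix, Perm.permMatrix, PEquiv.toMatrix_toPEquiv_mul,
    PEquiv.mul_toMatrix_toPEquiv]
  ext i j
  simp [Perm.inv_def]

theorem permMatrix_conj_structuralMatrices [DecidableEq m] [Fintype m] [NonAssocSemiring R]
    (σ : Perm m) (r : m → m → Prop) :
    {B | ∃ A ∈ structuralMatrices R r, B = σ.permMatrix R * A * σ⁻¹.permMatrix R} =
      structuralMatrices R (fun i j => r (σ i) (σ j)) := by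
  simp_rw [permMatrix_mul_mul_permMatrix_inv]
  ext B
  constructor
  · rintro ⟨A, hA, rfl⟩ i j h
    exact hA _ _ h
  · intro hB
    exact ⟨B.submatrix σ.symm σ.symm, fun i j h => by simpa using hB _ _ h, by simp⟩

end StructuralMatrices

section LinearExtensions

variable {α : Type*} {r : α → α → Prop}

theorem isPartialOrder_or_of_not_rel [IsPartialOrder α r] {a b : α} (hab : ¬r a b) :
    IsPartialOrder α (fun x y => r x y ∨ r x b ∧ r a y) where
  refl x := Or.inl (refl_of r x)
  trans := by
    rintro x y z (hxy | ⟨hxb, hay⟩) (hyz | ⟨hyb, haz⟩)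
    · exact Or.inl (trans_of r hxy hyz)
    · exact Or.inr ⟨trans_of r hxy hyb, haz⟩
    · exact Or.inr ⟨hxb, trans_of r hay hyz⟩
    · exact absurd (trans_of r hay hyb) hab
  antisymm := by
    rintro x y (hxy | ⟨hxb, hay⟩) (hyx | ⟨hyb, hax⟩)
    · exact antisymm hxy hyx
    · exact absurd (trans_of r hax (trans_of r hxy hyb)) hab
    · exact absurd (trans_of r hay (trans_of r hyx hxb)) hab
    · exact absurd (trans_of r hax hxb) hab

variable [Fintype α] {n : ℕ}

theorem exists_equiv_fin_iff_of_isLinearOrder (s : α → α → Prop) [IsLinearOrder α s]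
    (hn : Fintype.card α = n) : ∃ e : α ≃ Fin n, ∀ i j, s i j ↔ e i ≤ e j := by
  let : LinearOrder α :=
    { le := s
      le_refl := refl_of s
      le_trans := fun _ _ _ => trans_of s
      le_antisymm := fun _ _ => antisymm
      le_total := total_of s
      toDecidableLE := Classical.decRel s }
  exact ⟨(monoEquivOfFin α hn).symm.toEquiv, fun i j => (monoEquivOfFin α hn).symm.le_iff_le.symm⟩

theorem exists_equiv_fin_monotone_of_isPartialOrder (r : α → α → Prop) [IsPartialOrder α r]
    (hn : Fintype.card α = n) : ∃ e : α ≃ Fin n, ∀ i j, r i j → e i ≤ e j := by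
  obtain ⟨s, hs, hrs⟩ := extend_partialOrder r
  obtain ⟨e, he⟩ := exists_equiv_fin_iff_of_isLinearOrder s hn
  exact ⟨e, fun i j hij => (he i j).1 (hrs i j hij)⟩

theorem exists_equiv_fin_monotone_lt_of_not_rel [IsPartialOrder α r] (hn : Fintype.card α = n)
    {a b : α} (hab : ¬r a b) : ∃ e : α ≃ Fin n, (∀ i j, r i j → e i ≤ e j) ∧ e b < e a := by
  have := isPartialOrder_or_of_not_rel hab
  obtain ⟨e, he⟩ :=
    exists_equiv_fin_monotone_of_isPartialOrder (fun x y => r x y ∨ r x b ∧ r a y) hn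
  have hne : a ≠ b := fun h => hab (h ▸ refl_of r a)
  refine ⟨e, fun i j hij => he i j (Or.inl hij), ?_⟩
  exact lt_of_le_of_ne (he b a (Or.inr ⟨refl_of r b, refl_of r a⟩)) (e.injective.ne hne.symm)

theorem rel_iff_forall_equiv_fin_monotone [IsPartialOrder α r] (hn : Fintype.card α = n)
    {i j : α} : r i j ↔ ∀ e : α ≃ Fin n, (∀ x y, r x y → e x ≤ e y) → e i ≤ e j := by
  refine ⟨fun hij e he => he i j hij, fun h => ?_⟩
  by_contra hij
  obtain ⟨e, he, hlt⟩ := exists_equiv_fin_monotone_lt_of_not_rel hn hij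
  exact (h e he).not_gt hlt

end LinearExtensions

theorem antisymm_iff_exists_eq_forall_equiv_fin_le {α : Type u} [Fintype α] {n : ℕ}
    (hn : Fintype.card α = n) (θ : α → α → Prop) [IsPreorder α θ] :
    (∀ i j, θ i j → θ j i → i = j) ↔
      ∃ (ι : Type u) (_ : Nonempty ι) (f : ι → α ≃ Fin n), θ = fun i j => ∀ s, f s i ≤ f s j := by
  constructor
  · intro hanti
    have : IsPartialOrder α θ := { antisymm := hanti }
    refine ⟨{e : α ≃ Fin n // ∀ x y, θ x y → e x ≤ e y}, ?_, Subtype.val, ?_⟩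
    · obtain ⟨e, he⟩ := exists_equiv_fin_monotone_of_isPartialOrder θ hn
      exact ⟨⟨e, he⟩⟩
    · ext i j
      rw [rel_iff_forall_equiv_fin_monotone (r := θ) hn, Subtype.forall]
  · rintro ⟨ι, ⟨s⟩, f, rfl⟩ i j hij hji
    exact (f s).injective (le_antisymm (hij s) (hji s))

theorem structural_matrix_ring_order_iff_intersection_conjugates_upper_general
    (R : Type*) [Ring R] [Nontrivial R] (n : ℕ)
    (θ : Fin n → Fin n → Prop) (hr : Reflexive θ) (ht : Transitive θ) :
    (∀ i j, θ i j → θ j i → i = j) ↔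
      ∃ (ι : Type) (_ : Nonempty ι) (f : ι → Equiv.Perm (Fin n)),
        {A : Matrix (Fin n) (Fin n) R | ∀ i j, A i j ≠ 0 → θ i j} =
          ⋂ s : ι,
            {B : Matrix (Fin n) (Fin n) R |
              ∃ A ∈ {A : Matrix (Fin n) (Fin n) R | ∀ i j, A i j ≠ 0 → i ≤ j},
                B = (f s).permMatrix R * A * ((f s)⁻¹).permMatrix R} := by
  have hconj (σ : Perm (Fin n)) :
      {B : Matrix (Fin n) (Fin n) R |
        ∃ A ∈ {A : Matrix (Fin n) (Fin n) R | ∀ i j, A i j ≠ 0 → i ≤ j},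
          B = σ.permMatrix R * A * σ⁻¹.permMatrix R} =
        structuralMatrices R (fun i j => σ i ≤ σ j) :=
    permMatrix_conj_structuralMatrices σ (· ≤ ·)
  simp_rw [hconj, iInter_structuralMatrices]
  have : IsPreorder (Fin n) θ := { refl := hr, trans := @ht }
  rw [antisymm_iff_exists_eq_forall_equiv_fin_le (Fintype.card_fin n) θ]
  simp_rw [← structuralMatrices_inj (R := R)]
  rfl

theorem structural_matrix_ring_order_iff_intersection_conjugates_upper
    (R : Type*) [Ring R] [Nontrivial R] (n : ℕ) (hn : 1 ≤ n)
    (θ : Fin n → Fin n → Prop) (hr : Reflexive θ) (ht : Transitive θ) :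
    (∀ i j, θ i j → θ j i → i = j) ↔
      ∃ (ι : Type) (_ : Nonempty ι) (f : ι → Equiv.Perm (Fin n)),
        {A : Matrix (Fin n) (Fin n) R | ∀ i j, A i j ≠ 0 → θ i j} =
          ⋂ s : ι,
            {B : Matrix (Fin n) (Fin n) R |
              ∃ A ∈ {A : Matrix (Fin n) (Fin n) R | ∀ i j, A i j ≠ 0 → i ≤ j},
                B = (f s).permMatrix R * A * ((f s)⁻¹).permMatrix R} :=
  structural_matrix_ring_order_iff_intersection_conjugates_upper_general R n θ hr ht
end

section
/- Let R be a commutative ring and U : Fin n → Fin n → Ideal R. The set G = {A : ∀ i j, A i j ∈ U i j} is a subring of Matrix (Fin n) (Fin n) R if and only if (∀ i j k, U i j * U j k ≤ U i k) and (∀ i, (1 : R) ∈ U i i). -/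
theorem ideal_matrix_set_subring_iff
    (R : Type*) [CommRing R] (n : ℕ) (hn : 1 ≤ n)
    (U : Fin n → Fin n → Ideal R) :
    (∃ S : Subring (Matrix (Fin n) (Fin n) R),
        (S : Set (Matrix (Fin n) (Fin n) R)) = {A | ∀ i j, A i j ∈ U i j}) ↔
      ((∀ i j k, U i j * U j k ≤ U i k) ∧ ∀ i, (1 : R) ∈ U i i) := by
  constructor
  · rintro ⟨S, hS⟩
    have hmem : ∀ A : Matrix (Fin n) (Fin n) R, A ∈ S ↔ ∀ i j, A i j ∈ U i j := by
      intro A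
      rw [← SetLike.mem_coe, hS]; exact Iff.rfl
    constructor
    · intro i j k
      rw [Ideal.mul_le]
      intro a ha b hb
      have hA : Matrix.single i j a ∈ S := by
        rw [hmem]
        intro p q
        by_cases hp : p = i ∧ q = j
        · rw [hp.1, hp.2, Matrix.single_apply_same]; exact ha
        · rw [Matrix.single_apply_of_ne]
          · exact zero_mem _
          · tauto
      have hB : Matrix.single j k b ∈ S := by
        rw [hmem]
        intro p q
        by_cases hp : p = j ∧ q = k
        · rw [hp.1, hp.2, Matrix.single_apply_same]; exact hb
        · rw [Matrix.single_apply_of_ne]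
          · exact zero_mem _
          · tauto
      have := mul_mem hA hB
      rw [Matrix.single_mul_single_same, hmem] at this
      have := this i k
      rwa [Matrix.single_apply_same] at this
    · intro i
      have h1 : (1 : Matrix (Fin n) (Fin n) R) ∈ S := one_mem S
      rw [hmem] at h1
      have := h1 i i
      rwa [Matrix.one_apply_eq] at this
  · rintro ⟨h1, h2⟩
    refine ⟨{
      carrier := {A | ∀ i j, A i j ∈ U i j}
      zero_mem' := fun i j => zero_mem _
      one_mem' := by
        intro i j
        by_cases h : i = j
        · subst h; simpa [Matrix.one_apply_eq] using h2 i
        · simp [Matrix.one_apply_ne h, zero_mem]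
      add_mem' := fun ha hb i j => add_mem (ha i j) (hb i j)
      neg_mem' := fun ha i j => neg_mem (ha i j)
      mul_mem' := by
        intro A B hA hB i k
        rw [Matrix.mul_apply]
        exact sum_mem fun j _ => h1 i j k (Ideal.mul_mem_mul (hA i j) (hB j k))
    }, rfl⟩
end

section
/- Let R be a commutative ring and N a subring of Matrix (Fin n) (Fin n) R containing all diagonal matrices. Define U i j = {A i j : A ∈ N}. Then N = {A : ∀ i j, A i j ∈ U i j}. -/
theorem subring_containing_diagonal_determined_by_entries
    (R : Type*) [CommRing R] (n : ℕ) (hn : 1 ≤ n)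
    (N : Subring (Matrix (Fin n) (Fin n) R))
    (hdiag : ∀ d : Fin n → R, Matrix.diagonal d ∈ N) :
    (N : Set (Matrix (Fin n) (Fin n) R)) =
      {A | ∀ i j, ∃ B ∈ N, B i j = A i j} := by
  ext A
  simp only [Set.mem_setOf_eq, SetLike.mem_coe]
  constructor
  · intro hA i j; exact ⟨A, hA, rfl⟩
  · intro h
    choose B hB hBe using h
    have key : A = ∑ i, ∑ j,
        Matrix.diagonal (Pi.single i 1) * B i j * Matrix.diagonal (Pi.single j 1) := by
      ext k l
      simp only [Matrix.sum_apply, Matrix.mul_diagonal, Matrix.diagonal_mul,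
        Pi.single_apply]
      simp [Finset.sum_ite_eq, Finset.sum_ite_eq', eq_comm, hBe]
    rw [key]
    exact Subring.sum_mem _ fun i _ => Subring.sum_mem _ fun j _ =>
      Subring.mul_mem _ (Subring.mul_mem _ (hdiag _) (hB i j)) (hdiag _)
end

section
/- For a commutative ring R, the map U ↦ M_n(R,U) is an order isomorphism between the set of reflexive-transitive ideal matrices {U : Fin n → Fin n → Ideal R | ∀ i, U i i = ⊤ ∧ ∀ i j k, U i j * U j k ≤ U i k} ordered entrywise, and the set of subrings of Matrix (Fin n) (Fin n) R containing all diagonal matrices, ordered by inclusion. -/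
/-!
A reflexive-transitive ideal matrix `U` cuts out the subring of matrices whose `(i, j)` entry
lies in `U i j`. Conversely, a subring `S` containing the diagonal matrices is closed under
multiplication by scalar matrices, so the sets `{r | single i j r ∈ S}` are ideals, and they
form a reflexive-transitive ideal matrix because `single i j a * single j k b = single i k (a * b)`.
Since the matrix units `single i i 1` are diagonal, `A ∈ S` iff every corner
`single i i 1 * A * single j j 1 = single i j (A i j)` lies in `S`, so `S` is recovered from
these ideals.
-/

namespace Matrix

variable {ι R : Type*} [Fintype ι] [DecidableEq ι] [Ring R]

def subringOfIdeals (U : ι → ι → Ideal R) (hU : ∀ i, U i i = ⊤)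
    (hmul : ∀ i j k, U i j * U j k ≤ U i k) : Subring (Matrix ι ι R) where
  carrier := {A | ∀ i j, A i j ∈ U i j}
  zero_mem' _ _ := zero_mem _
  one_mem' i j := by
    obtain rfl | hij := eq_or_ne i j
    · simp [hU]
    · simp [one_apply_ne hij]
  add_mem' hA hB i j := add_mem (hA i j) (hB i j)
  neg_mem' hA i j := neg_mem (hA i j)
  mul_mem' hA hB i j :=
    Ideal.sum_mem _ fun k _ => hmul i k j (Ideal.mul_mem_mul (hA i k) (hB k j))

section subringOfIdeals

variable {U : ι → ι → Ideal R} {hU : ∀ i, U i i = ⊤} {hmul : ∀ i j k, U i j * U j k ≤ U i k}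

theorem diagonal_mem_subringOfIdeals (d : ι → R) :
    diagonal d ∈ subringOfIdeals U hU hmul := by
  intro i j
  obtain rfl | hij := eq_or_ne i j
  · simp [hU]
  · simp [diagonal_apply_ne _ hij]

theorem single_mem_subringOfIdeals_iff {i j : ι} {r : R} :
    single i j r ∈ subringOfIdeals U hU hmul ↔ r ∈ U i j := by
  refine ⟨fun h => by simpa using h i j, fun hr k l => ?_⟩
  by_cases hkl : i = k ∧ j = l
  · obtain ⟨rfl, rfl⟩ := hkl
    simpa using hr
  · simp [single_apply_of_ne _ _ _ _ _ hkl]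

end subringOfIdeals

section entryIdeal

theorem single_one_mem_of_diagonal_mem {S : Subring (Matrix ι ι R)}
    (hS : ∀ d : ι → R, diagonal d ∈ S) (i : ι) : single i i (1 : R) ∈ S :=
  diagonal_single i (1 : R) ▸ hS _

variable (S : Subring (Matrix ι ι R)) (hS : ∀ d : ι → R, diagonal d ∈ S)

def entryIdeal (i j : ι) : Ideal R where
  carrier := {r | single i j r ∈ S}
  zero_mem' := by simp
  add_mem' {a b} ha hb := show single i j (a + b) ∈ S by
    rw [single_add]
    exact S.add_mem ha hb
  smul_mem' c r hr := show single i j (c • r) ∈ S by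
    rw [← smul_single, smul_eq_diagonal_mul]
    exact S.mul_mem (hS _) hr

variable {S hS}

theorem mem_entryIdeal {i j : ι} {r : R} : r ∈ entryIdeal S hS i j ↔ single i j r ∈ S :=
  Iff.rfl

variable (hS)

theorem entryIdeal_self (i : ι) : entryIdeal S hS i i = ⊤ :=
  (Ideal.eq_top_iff_one _).2 (single_one_mem_of_diagonal_mem hS i)

theorem entryIdeal_mul_le (i j k : ι) :
    entryIdeal S hS i j * entryIdeal S hS j k ≤ entryIdeal S hS i k :=
  Ideal.mul_le.2 fun a ha b hb => by
    simpa only [mem_entryIdeal, single_mul_single_same] using S.mul_mem ha hb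

theorem mem_iff_forall_mem_entryIdeal {A : Matrix ι ι R} :
    A ∈ S ↔ ∀ i j, A i j ∈ entryIdeal S hS i j := by
  refine ⟨fun hA i j => ?_, fun h => ?_⟩
  · have hcorner := S.mul_mem (S.mul_mem (single_one_mem_of_diagonal_mem hS i) hA)
      (single_one_mem_of_diagonal_mem hS j)
    simpa only [single_mul_mul_single, one_mul, mul_one, mem_entryIdeal] using hcorner
  · rw [matrix_eq_sum_single A]
    exact S.sum_mem fun i _ => S.sum_mem fun j _ => h i j

end entryIdeal

variable (ι R) in
def idealMatrixOrderIso :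
    {U : ι → ι → Ideal R // (∀ i, U i i = ⊤) ∧ (∀ i j k, U i j * U j k ≤ U i k)} ≃o
      {S : Subring (Matrix ι ι R) // ∀ d : ι → R, diagonal d ∈ S} :=
  Equiv.toOrderIso
    { toFun U := ⟨subringOfIdeals U.1 U.2.1 U.2.2, diagonal_mem_subringOfIdeals⟩
      invFun S := ⟨entryIdeal S.1 S.2, entryIdeal_self S.2, entryIdeal_mul_le S.2⟩
      left_inv U := Subtype.ext <| funext₂ fun _ _ => Ideal.ext fun _ =>
        single_mem_subringOfIdeals_iff (hU := U.2.1) (hmul := U.2.2)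
      right_inv S := Subtype.ext <| SetLike.ext fun _ =>
        (mem_iff_forall_mem_entryIdeal S.2).symm }
    (fun _ _ hUV _ hA i j => hUV i j (hA i j))
    (fun _ _ hST _ _ _ hr => hST hr)

theorem coe_idealMatrixOrderIso
    (U : {U : ι → ι → Ideal R // (∀ i, U i i = ⊤) ∧ (∀ i j k, U i j * U j k ≤ U i k)}) :
    ((idealMatrixOrderIso ι R U : Subring (Matrix ι ι R)) : Set (Matrix ι ι R)) =
      {A | ∀ i j, A i j ∈ U.1 i j} :=
  rfl

end Matrix

theorem ideal_matrix_order_iso_general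
    (R : Type*) [CommRing R] (n : ℕ) :
    ∃ e : {U : Fin n → Fin n → Ideal R //
            (∀ i, U i i = ⊤) ∧ (∀ i j k, U i j * U j k ≤ U i k)} ≃o
          {S : Subring (Matrix (Fin n) (Fin n) R) //
            ∀ d : Fin n → R, Matrix.diagonal d ∈ S},
      ∀ U, ((e U : Subring (Matrix (Fin n) (Fin n) R)) :
              Set (Matrix (Fin n) (Fin n) R)) =
            {A | ∀ i j, A i j ∈ U.1 i j} :=
  ⟨Matrix.idealMatrixOrderIso (Fin n) R, Matrix.coe_idealMatrixOrderIso⟩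

theorem ideal_matrix_order_iso
    (R : Type*) [CommRing R] (n : ℕ) (hn : 1 ≤ n) :
    ∃ e : {U : Fin n → Fin n → Ideal R //
            (∀ i, U i i = ⊤) ∧ (∀ i j k, U i j * U j k ≤ U i k)} ≃o
          {S : Subring (Matrix (Fin n) (Fin n) R) //
            ∀ d : Fin n → R, Matrix.diagonal d ∈ S},
      ∀ U, ((e U : Subring (Matrix (Fin n) (Fin n) R)) :
              Set (Matrix (Fin n) (Fin n) R)) =
            {A | ∀ i j, A i j ∈ U.1 i j} :=
  ideal_matrix_order_iso_general R n
end
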